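/- Let e be a multiplication-free unit expression and τ an environment binding variables to named quantities. Then 𝒩ℰ⟦e⟧τ is defined if and only if all variables occurring in e whose binding under τ is Named share the same name; moreover, when defined, 𝒩ℰ⟦e⟧τ = Named n if some variable v occurring in e has τ(v) = Named n, and 𝒩ℰ⟦e⟧τ = Noname if every variable v occurring in e has τ(v) = Noname. -/

import Mathlib

/-- A named quantity: either `Named n` for a name (string) `n`, or `Noname`. -/
inductive NamedQ where
  | Named : String → NamedQ
  | Noname : NamedQ
deriving DecidableEq

/-- The partial operation ◇ on named quantities, modelled via `Option`:
`none` means undefined. -/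
def diamond : NamedQ → NamedQ → Option NamedQ
  | .Named n₁, .Named n₂ => if n₁ = n₂ then some (.Named n₁) else none
  | .Named n, .Noname => some (.Named n)
  | .Noname, .Named n => some (.Named n)
  | .Noname, .Noname => some .Noname

/-- The total operation △ on named quantities: always returns `Noname`. -/
def triangle : NamedQ → NamedQ → NamedQ := fun _ _ => .Noname

/-- Unit expressions over a type `V` of variables: a variable, a sum, a scalar
multiple by a real constant, or a product. -/
inductive UExp (V : Type) where
  | var : V → UExp V
  | add : UExp V → UExp V → UExp V
  | smul : ℝ → UExp V → UExp V
  | mul : UExp V → UExp V → UExp V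

/-- A unit expression is multiplication-free if it contains no product. -/
def UExp.mulFree {V : Type} : UExp V → Prop
  | .var _ => True
  | .add e₁ e₂ => e₁.mulFree ∧ e₂.mulFree
  | .smul _ e => e.mulFree
  | .mul _ _ => False

/-- The list of variables occurring in a unit expression. -/
def UExp.vars {V : Type} : UExp V → List V
  | .var v => [v]
  | .add e₁ e₂ => e₁.vars ++ e₂.vars
  | .smul _ e => e.vars
  | .mul e₁ e₂ => e₁.vars ++ e₂.vars

/-- The partial analysis function 𝒩ℰ: given an environment `τ` binding
variables to named quantities, compute the named quantity of a unit
expression (`none` = undefined). -/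
def NE {V : Type} (τ : V → NamedQ) : UExp V → Option NamedQ
  | .var v => some (τ v)
  | .add e₁ e₂ => do
      let q₁ ← NE τ e₁
      let q₂ ← NE τ e₂
      diamond q₁ q₂
  | .smul _ e => NE τ e
  | .mul e₁ e₂ => do
      let q₁ ← NE τ e₁
      let q₂ ← NE τ e₂
      pure (triangle q₁ q₂)

section
variable {V : Type}

lemma NE_sound (τ : V → NamedQ) : ∀ (e : UExp V), e.mulFree → ∀ q, NE τ e = some q →
    (q = .Noname → ∀ v ∈ e.vars, τ v = .Noname) ∧
    (∀ n, q = .Named n → (∃ v ∈ e.vars, τ v = .Named n) ∧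
      ∀ v ∈ e.vars, ∀ m, τ v = .Named m → m = n)
  | .var v, _, q, hq => by
    simp [NE] at hq
    subst hq
    constructor
    · intro h w hw; simp [UExp.vars] at hw; subst hw; exact h
    · intro n hn; constructor
      · exact ⟨v, by simp [UExp.vars], hn⟩
      · intro w hw m hm; simp [UExp.vars] at hw; subst hw; rw [hn] at hm
        exact (NamedQ.Named.injEq _ _ ▸ hm).symm
  | .add e₁ e₂, hmf, q, hq => by
    obtain ⟨h₁, h₂⟩ := hmf
    simp only [NE, Option.bind_eq_bind, Option.bind_eq_some_iff] at hq
    obtain ⟨q₁, hq₁, q₂, hq₂, hd⟩ := hq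
    obtain ⟨A₁, B₁⟩ := NE_sound τ e₁ h₁ q₁ hq₁
    obtain ⟨A₂, B₂⟩ := NE_sound τ e₂ h₂ q₂ hq₂
    constructor
    · rintro rfl v hv
      cases q₁ <;> cases q₂ <;> simp [diamond] at hd
      simp [UExp.vars] at hv
      rcases hv with hv | hv
      · exact A₁ rfl v hv
      · exact A₂ rfl v hv
    · rintro n rfl
      have hcases : (q₁ = .Named n ∧ (q₂ = .Named n ∨ q₂ = .Noname)) ∨
          (q₁ = .Noname ∧ q₂ = .Named n) := by
        cases q₁ <;> cases q₂ <;> simp [diamond] at hd ⊢ <;> simp_all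
        exact hd.1.symm.trans hd.2
      constructor
      · rcases hcases with ⟨h1, _⟩ | ⟨_, h2⟩
        · obtain ⟨v, hv, hτ⟩ := (B₁ n h1).1
          exact ⟨v, by simp [UExp.vars]; exact Or.inl hv, hτ⟩
        · obtain ⟨v, hv, hτ⟩ := (B₂ n h2).1
          exact ⟨v, by simp [UExp.vars]; exact Or.inr hv, hτ⟩
      · intro v hv m hm
        simp [UExp.vars] at hv
        rcases hcases with ⟨h1, h2 | h2⟩ | ⟨h1, h2⟩ <;>
          rcases hv with hv | hv
        · exact (B₁ n h1).2 v hv m hm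
        · exact (B₂ n h2).2 v hv m hm
        · exact (B₁ n h1).2 v hv m hm
        · exact absurd (A₂ h2 v hv) (by simp [hm])
        · exact absurd (A₁ h1 v hv) (by simp [hm])
        · exact (B₂ n h2).2 v hv m hm
  | .smul r e, hmf, q, hq => by
    have := NE_sound τ e hmf q hq
    simpa [UExp.vars] using this
  | .mul _ _, hmf, _, _ => absurd hmf (by simp [UExp.mulFree])

lemma NE_noname (τ : V → NamedQ) : ∀ (e : UExp V), e.mulFree →
    (∀ v ∈ e.vars, τ v = .Noname) → NE τ e = some .Noname
  | .var v, _, h => by simp [NE, h v (by simp [UExp.vars])]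
  | .add e₁ e₂, ⟨h₁, h₂⟩, h => by
    have H1 := NE_noname τ e₁ h₁ (fun v hv => h v (by simp [UExp.vars]; exact Or.inl hv))
    have H2 := NE_noname τ e₂ h₂ (fun v hv => h v (by simp [UExp.vars]; exact Or.inr hv))
    simp [NE, H1, H2, diamond]
  | .smul r e, hmf, h => NE_noname τ e hmf (by simpa [UExp.vars] using h)
  | .mul _ _, hmf, _ => absurd hmf (by simp [UExp.mulFree])

lemma NE_val (τ : V → NamedQ) (n : String) : ∀ (e : UExp V), e.mulFree →
    (∀ v ∈ e.vars, ∀ m, τ v = .Named m → m = n) →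
    NE τ e = some (.Named n) ∨ NE τ e = some .Noname
  | .var v, _, hu => by
    cases hτ : τ v with
    | Noname => simp [NE, hτ]
    | Named m =>
      have := hu v (by simp [UExp.vars]) m hτ
      subst this
      simp [NE, hτ]
  | .add e₁ e₂, ⟨h₁, h₂⟩, hu => by
    have V1 := NE_val τ n e₁ h₁ (fun v hv => hu v (by simp [UExp.vars]; exact Or.inl hv))
    have V2 := NE_val τ n e₂ h₂ (fun v hv => hu v (by simp [UExp.vars]; exact Or.inr hv))
    rcases V1 with V1 | V1 <;> rcases V2 with V2 | V2 <;> simp [NE, V1, V2, diamond]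
  | .smul r e, hmf, hu => NE_val τ n e hmf (by simpa [UExp.vars] using hu)
  | .mul _ _, hmf, _ => absurd hmf (by simp [UExp.mulFree])

lemma NE_named (τ : V → NamedQ) (e : UExp V) (hmf : e.mulFree) (n : String)
    (hu : ∀ v ∈ e.vars, ∀ m, τ v = .Named m → m = n)
    (hex : ∃ v ∈ e.vars, τ v = .Named n) : NE τ e = some (.Named n) := by
  rcases NE_val τ n e hmf hu with h | h
  · exact h
  · obtain ⟨v, hv, hτ⟩ := hex
    have := (NE_sound τ e hmf _ h).1 rfl v hv
    simp [hτ] at this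

end
/-- for a multiplication-free unit expression `e`, `𝒩ℰ⟦e⟧τ` is
defined iff all variables of `e` with `Named` bindings share the same name;
when defined, it equals `Named n` if some variable is bound to `Named n`, and
`Noname` if every variable is bound to `Noname`. -/
theorem ne_mulFree_spec {V : Type} (e : UExp V) (τ : V → NamedQ)
    (hmf : e.mulFree) :
    ((NE τ e).isSome ↔
      ∀ v ∈ e.vars, ∀ w ∈ e.vars, ∀ m m',
        τ v = .Named m → τ w = .Named m' → m = m') ∧
    (∀ n, ∀ v ∈ e.vars, τ v = .Named n → (NE τ e).isSome →
      NE τ e = some (.Named n)) ∧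
    ((∀ v ∈ e.vars, τ v = .Noname) → (NE τ e).isSome →
      NE τ e = some .Noname) := by

  refine ⟨⟨?_, ?_⟩, ?_, ?_⟩
  · intro hs v hv w hw m m' hm hm'
    obtain ⟨q, hq⟩ := Option.isSome_iff_exists.mp hs
    have B := (NE_sound τ e hmf q hq).2
    cases q with
    | Noname =>
      have := (NE_sound τ e hmf _ hq).1 rfl v hv
      simp [hm] at this
    | Named n =>
      rw [(B n rfl).2 v hv m hm, (B n rfl).2 w hw m' hm']
  · intro h
    by_cases hex : ∃ n, ∃ v ∈ e.vars, τ v = .Named n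
    · obtain ⟨n, hexn⟩ := hex
      have := NE_named τ e hmf n (fun v hv m hm =>
        h v hv hexn.choose hexn.choose_spec.1 m n hm hexn.choose_spec.2) hexn
      simp [this]
    · push_neg at hex
      have := NE_noname τ e hmf (fun v hv => by
        cases hτv : τ v with
        | Noname => rfl
        | Named m => exact absurd hτv (hex m v hv))
      simp [this]
  · intro n v hv hτ hs
    obtain ⟨q, hq⟩ := Option.isSome_iff_exists.mp hs
    have := NE_sound τ e hmf q hq
    cases q with
    | Noname => simpa [hτ] using this.1 rfl v hv
    | Named m =>
      rw [hq, (this.2 m rfl).2 v hv n hτ]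
  · intro h _
    exact NE_noname τ e hmf h
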